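/- Let D be the n×n matrix with D[i,j] = |i - j| (the distance matrix of the path 1—2—...—n), and let D^L be its distance Laplacian: (D^L)_{ij} = -|i-j| for i ≠ j and (D^L)_{ii} = ∑_j |i-j|. Then the largest eigenvalue λ_n of D^L is simple. -/

import Mathlib

open Matrix Finset

/-- The (n)×(n+1) difference matrix: `S i i = -1`, `S i (i+1) = 1`, else `0`. -/
noncomputable def Smat (n : ℕ) : Matrix (Fin n) (Fin (n + 1)) ℝ :=
  Matrix.of fun i j => if (j : ℕ) = (i : ℕ) then -1 else if (j : ℕ) = (i : ℕ) + 1 then 1 else 0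

/-- The (n+1)×n cumulative-sum matrix: `T i j = 1` iff `j < i`. -/
noncomputable def Tmat (n : ℕ) : Matrix (Fin (n + 1)) (Fin n) ℝ :=
  Matrix.of fun i j => if (j : ℕ) < (i : ℕ) then 1 else 0

/-- The Laplacian associated with a symmetric matrix `A`:
off-diagonal entries `-A i j`, diagonal entry `∑_{k ≠ i} A i k`. -/
noncomputable def lap {m : Type*} [Fintype m] [DecidableEq m] (A : Matrix m m ℝ) :
    Matrix m m ℝ :=
  Matrix.of fun i j => if i = j then ∑ k ∈ Finset.univ.filter (fun k => k ≠ i), A i k else -A i j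

/-
Write `S = Smat n`, `T = Tmat n` and `L = lap D`. Since `S * T = 1` and the rows of `L` sum to zero,
`L * T * S = L`; hence `M = S * L * T` has `M ^ k = S * L ^ k * T`, and `S` maps every eigenvector of
`L` for the largest eigenvalue `λ > 0` to an eigenvector of `M` for `λ` (nonzero, as `S` kills only
the constants, which `L` kills). For the path every entry of
`M` is at least `1`. As `L` is symmetric with spectrum in `[0, λ]` (Gershgorin), `M ^ k v` grows at
most like `λ ^ k`, and the Perron–Frobenius argument shows that `|u|` is again an eigenvector of `M`
for any such eigenvector `u`, so `u` has no zero entry. Thus `z ↦ (S z) 0` is injective on the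
`λ`-eigenspace of `L`, which is therefore a line.
-/

theorem Submodule.exists_eq_smul_of_forall_apply_ne_zero {K V : Type*} [Field K] [AddCommGroup V]
    [Module K V] {p : Submodule K V} {f : V →ₗ[K] K} (hf : ∀ z ∈ p, z ≠ 0 → f z ≠ 0) {x y : V}
    (hx : x ∈ p) (hx0 : x ≠ 0) (hy : y ∈ p) : ∃ c : K, y = c • x := by
  refine ⟨f y / f x, by_contra fun hne => ?_⟩
  refine hf _ (p.sub_mem hy (p.smul_mem _ hx)) (sub_ne_zero.mpr hne) ?_
  rw [map_sub, map_smul, smul_eq_mul, div_mul_cancel₀ _ (hf x hx hx0), sub_self]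

theorem exists_pos_smul_le {ι : Type*} [Finite ι] {b c : ι → ℝ} (hc : ∀ i, 0 < c i) :
    ∃ ε > (0 : ℝ), ε • b ≤ c := by
  have hsmall : ∀ i, ∀ᶠ ε in nhdsWithin (0 : ℝ) (Set.Ioi 0), ε * b i < c i := fun i =>
    (((continuous_id.mul continuous_const).tendsto' 0 0 (zero_mul _)).mono_left
      nhdsWithin_le_nhds).eventually (gt_mem_nhds (by simpa using hc i))
  obtain ⟨ε, hε, hεb⟩ :=
    (eventually_mem_nhdsWithin.and (Filter.eventually_all.mpr hsmall)).exists
  exact ⟨ε, hε, fun i => (hεb i).le⟩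

theorem not_forall_pow_mul_le {r μ b C : ℝ} (hr : 0 ≤ r) (hrμ : r < μ) (hb : 0 < b) :
    ¬ ∀ k : ℕ, μ ^ k * b ≤ C * r ^ k := by
  intro h
  have hlim : Filter.Tendsto (fun k : ℕ => C * (r / μ) ^ k) Filter.atTop (nhds 0) := by
    simpa using (tendsto_pow_atTop_nhds_zero_of_lt_one (div_nonneg hr (hr.trans_lt hrμ).le)
      ((div_lt_one (hr.trans_lt hrμ)).mpr hrμ)).const_mul C
  refine hb.not_ge (ge_of_tendsto' hlim fun k => ?_)
  have hμk : 0 < μ ^ k := pow_pos (hr.trans_lt hrμ) k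
  rw [div_pow, ← mul_div_assoc, le_div_iff₀ hμk, mul_comm]
  exact h k

namespace Matrix

variable {ι : Type*} [Fintype ι] {M : Matrix ι ι ℝ}

theorem pow_mulVec_of_mulVec_eq_smul [DecidableEq ι] {μ : ℝ} {v : ι → ℝ} (h : M *ᵥ v = μ • v)
    (k : ℕ) : M ^ k *ᵥ v = μ ^ k • v := by
  induction k with
  | zero => simp
  | succ k ih => rw [pow_succ, ← mulVec_mulVec, h, mulVec_smul, ih, smul_smul, pow_succ']

theorem IsHermitian.exists_abs_pow_mulVec_apply_le [DecidableEq ι] (hM : M.IsHermitian) {r : ℝ}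
    (hr : ∀ i, |hM.eigenvalues i| ≤ r) (c : ι → ℝ) (j : ι) :
    ∃ C, ∀ k : ℕ, |(M ^ k *ᵥ c) j| ≤ C * r ^ k := by
  set b := hM.eigenvectorBasis
  set a := b.repr (WithLp.toLp 2 c)
  have hc : c = ∑ i, a i • ⇑(b i) := by
    simpa using (congrArg WithLp.ofLp (b.sum_repr (WithLp.toLp 2 c))).symm
  refine ⟨∑ i, |a i| * |b i j|, fun k => ?_⟩
  rw [hc, mulVec_sum, Finset.sum_apply, Finset.sum_mul]
  refine (Finset.abs_sum_le_sum_abs _ _).trans (Finset.sum_le_sum fun i _ => ?_)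
  rw [mulVec_smul, pow_mulVec_of_mulVec_eq_smul (hM.mulVec_eigenvectorBasis i)]
  simp only [Pi.smul_apply, smul_eq_mul, abs_mul, abs_pow]
  have := pow_le_pow_left₀ (abs_nonneg _) (hr i) k
  calc |a i| * (|hM.eigenvalues i| ^ k * |b i j|) ≤ |a i| * (r ^ k * |b i j|) := by gcongr
    _ = |a i| * |b i j| * r ^ k := by ring

theorem mulVec_pos_of_pos (hM : ∀ i j, 0 < M i j) {a : ι → ℝ} (ha : 0 ≤ a) (ha0 : a ≠ 0)
    (i : ι) : 0 < (M *ᵥ a) i := by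
  obtain ⟨j, hj⟩ := Function.ne_iff.mp ha0
  exact Finset.sum_pos' (fun k _ => mul_nonneg (hM i k).le (ha k))
    ⟨j, Finset.mem_univ j, mul_pos (hM i j) ((ha j).lt_of_ne' hj)⟩

theorem mulVec_mono_of_nonneg (hM : ∀ i j, 0 ≤ M i j) {a b : ι → ℝ} (hab : a ≤ b) :
    M *ᵥ a ≤ M *ᵥ b := fun i =>
  Finset.sum_le_sum fun j _ => mul_le_mul_of_nonneg_left (hab j) (hM i j)

theorem pow_smul_le_pow_mulVec [DecidableEq ι] (hM : ∀ i j, 0 ≤ M i j) {μ : ℝ} (hμ : 0 ≤ μ)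
    {b : ι → ℝ} (hb : μ • b ≤ M *ᵥ b) (k : ℕ) : μ ^ k • b ≤ M ^ k *ᵥ b := by
  induction k with
  | zero => simp
  | succ k ih =>
    calc μ ^ (k + 1) • b = μ ^ k • (μ • b) := by rw [pow_succ, mul_smul]
      _ ≤ μ ^ k • (M *ᵥ b) := smul_le_smul_of_nonneg_left hb (pow_nonneg hμ k)
      _ = M *ᵥ (μ ^ k • b) := (mulVec_smul _ _ _).symm
      _ ≤ M *ᵥ (M ^ k *ᵥ b) := mulVec_mono_of_nonneg hM ih
      _ = M ^ (k + 1) *ᵥ b := by rw [mulVec_mulVec, pow_succ']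

theorem mulVec_eq_smul_of_smul_le_mulVec [DecidableEq ι] (hM : ∀ i j, 0 < M i j) {r : ℝ}
    (hr : 0 ≤ r) (hgrowth : ∀ (v : ι → ℝ) (i : ι), ∃ C, ∀ k : ℕ, (M ^ k *ᵥ v) i ≤ C * r ^ k)
    {a : ι → ℝ} (ha : 0 ≤ a) (ha0 : a ≠ 0) (hle : r • a ≤ M *ᵥ a) : M *ᵥ a = r • a := by
  by_contra hne
  -- `b = M a` and `M b - r b = M (M a - r a)` are positive, so `M b ≥ (r + ε) b` and `M ^ k b`
  -- outgrows `r ^ k`.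
  set b := M *ᵥ a
  have hb : ∀ i, 0 < b i := mulVec_pos_of_pos hM ha ha0
  have hgap : ∀ i, 0 < (M *ᵥ b - r • b) i := by
    have hdiff : M *ᵥ b - r • b = M *ᵥ (b - r • a) := by rw [mulVec_sub, mulVec_smul]
    rw [hdiff]
    exact mulVec_pos_of_pos hM (sub_nonneg.mpr hle) (sub_ne_zero.mpr hne)
  obtain ⟨ε, hε, hεb⟩ := exists_pos_smul_le (b := b) hgap
  have hstep : (r + ε) • b ≤ M *ᵥ b := fun i => by
    have := hεb i
    simp only [Pi.smul_apply, Pi.sub_apply, smul_eq_mul] at this ⊢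
    linarith
  obtain ⟨i, -⟩ := Function.ne_iff.mp ha0
  obtain ⟨C, hC⟩ := hgrowth b i
  refine not_forall_pow_mul_le (C := C) hr (lt_add_of_pos_right r hε) (hb i) fun k => ?_
  calc (r + ε) ^ k * b i = ((r + ε) ^ k • b) i := rfl
    _ ≤ (M ^ k *ᵥ b) i :=
      pow_smul_le_pow_mulVec (fun i j => (hM i j).le) (by positivity) hstep k i
    _ ≤ C * r ^ k := hC k

theorem apply_ne_zero_of_mulVec_eq_smul [DecidableEq ι] (hM : ∀ i j, 0 < M i j) {r : ℝ}
    (hr : 0 ≤ r) (hgrowth : ∀ (v : ι → ℝ) (i : ι), ∃ C, ∀ k : ℕ, (M ^ k *ᵥ v) i ≤ C * r ^ k)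
    {u : ι → ℝ} (hu0 : u ≠ 0) (hu : M *ᵥ u = r • u) (i : ι) : u i ≠ 0 := by
  set a : ι → ℝ := fun j => |u j|
  have ha : 0 ≤ a := fun j => abs_nonneg (u j)
  have ha0 : a ≠ 0 := fun h => hu0 (funext fun j => abs_eq_zero.mp (congrFun h j))
  have hle : r • a ≤ M *ᵥ a := fun i =>
    calc r * |u i| = |(M *ᵥ u) i| := by
          rw [hu, Pi.smul_apply, smul_eq_mul, abs_mul, abs_of_nonneg hr]
      _ ≤ ∑ j, |M i j * u j| := Finset.abs_sum_le_sum_abs _ _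
      _ = (M *ᵥ a) i := Finset.sum_congr rfl fun j _ => by rw [abs_mul, abs_of_pos (hM i j)]
  have hpos := mulVec_pos_of_pos hM ha ha0 i
  rw [mulVec_eq_smul_of_smul_le_mulVec hM hr hgrowth ha ha0 hle] at hpos
  intro h
  simp [a, h] at hpos

end Matrix

section Laplacian

variable {m : Type*} [Fintype m] [DecidableEq m] {A : Matrix m m ℝ}

theorem lap_apply_self (i : m) : lap A i i = ∑ k ∈ univ.erase i, A i k := by
  simp [lap, Finset.filter_ne']

theorem lap_apply_of_ne {i j : m} (h : i ≠ j) : lap A i j = -A i j := by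
  simp [lap, h]

theorem sum_lap_apply (i : m) : ∑ j, lap A i j = 0 := by
  rw [← Finset.add_sum_erase _ _ (Finset.mem_univ i), lap_apply_self, ← Finset.sum_add_distrib]
  refine Finset.sum_eq_zero fun k hk => ?_
  rw [lap_apply_of_ne (Finset.ne_of_mem_erase hk).symm, add_neg_cancel]

theorem lap_mulVec_one : lap A *ᵥ 1 = 0 := by
  ext i
  simpa [mulVec, dotProduct] using sum_lap_apply i

theorem lap_isHermitian (hA : A.IsHermitian) : (lap A).IsHermitian := by
  refine IsHermitian.ext fun i j => ?_
  rcases eq_or_ne i j with rfl | h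
  · simp
  · rw [lap_apply_of_ne h, lap_apply_of_ne h.symm, star_trivial, ← hA.apply i j, star_trivial]

theorem lap_eigenvalue_nonneg (hA : ∀ i j, 0 ≤ A i j) {μ : ℝ} {v : m → ℝ} (hv : v ≠ 0)
    (h : lap A *ᵥ v = μ • v) : 0 ≤ μ := by
  have hμ : Module.End.HasEigenvalue (toLin' (lap A)) μ :=
    Module.End.hasEigenvalue_of_hasEigenvector
      ⟨Module.End.mem_eigenspace_iff.mpr (by rwa [toLin'_apply]), hv⟩
  obtain ⟨k, hk⟩ := eigenvalue_mem_ball hμ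
  have hradius : ∑ j ∈ univ.erase k, ‖lap A k j‖ = lap A k k := by
    rw [lap_apply_self]
    refine Finset.sum_congr rfl fun j hj => ?_
    rw [lap_apply_of_ne (Finset.ne_of_mem_erase hj).symm, norm_neg, Real.norm_of_nonneg (hA k j)]
  rw [hradius, Metric.mem_closedBall, Real.dist_eq, abs_sub_le_iff] at hk
  linarith

end Laplacian

section DifferenceMatrices

variable {n : ℕ} {α : Type*}

theorem Smat_row (i : Fin n) : Smat n i = Pi.single i.succ 1 - Pi.single i.castSucc 1 := by
  ext k
  simp only [Smat, of_apply, Pi.sub_apply, Pi.single_apply, Fin.ext_iff, Fin.val_succ,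
    Fin.val_castSucc]
  split_ifs <;> first | omega | norm_num

theorem Smat_mul_apply [Fintype α] (X : Matrix (Fin (n + 1)) α ℝ) (i : Fin n) (j : α) :
    (Smat n * X) i j = X i.succ j - X i.castSucc j := by
  simp [mul_apply', Smat_row, sub_dotProduct]

theorem Smat_mulVec_apply (z : Fin (n + 1) → ℝ) (i : Fin n) :
    (Smat n *ᵥ z) i = z i.succ - z i.castSucc := by
  change Smat n i ⬝ᵥ z = _
  simp [Smat_row, sub_dotProduct]

theorem mul_Tmat_apply [Fintype α] (X : Matrix α (Fin (n + 1)) ℝ) (a : α) (j : Fin n) :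
    (X * Tmat n) a j = ∑ l ∈ univ.filter (fun l : Fin (n + 1) => (j : ℕ) < l), X a l := by
  simp [Tmat, mul_apply, Finset.sum_filter]

theorem Tmat_mulVec_zero (u : Fin n → ℝ) : (Tmat n *ᵥ u) 0 = 0 := by
  simp [Tmat, mulVec, dotProduct]

theorem Tmat_mulVec_succ (u : Fin n → ℝ) (i : Fin n) :
    (Tmat n *ᵥ u) i.succ = (Tmat n *ᵥ u) i.castSucc + u i := by
  simp only [Tmat, mulVec, dotProduct, of_apply, Fin.val_succ, Fin.val_castSucc,
    ite_mul, one_mul, zero_mul, ← Finset.sum_filter]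
  rw [add_comm _ (u i), ← Finset.sum_insert (by simp)]
  congr 1
  ext j
  simp only [Finset.mem_insert, Finset.mem_filter, Finset.mem_univ, true_and, Fin.ext_iff]
  omega

theorem Smat_mul_Tmat : Smat n * Tmat n = 1 := by
  ext i j
  simp only [Smat_mul_apply, Tmat, of_apply, Fin.val_succ, Fin.val_castSucc, one_apply, Fin.ext_iff]
  split_ifs <;> first | omega | norm_num

theorem Tmat_mulVec_Smat_mulVec (z : Fin (n + 1) → ℝ) :
    Tmat n *ᵥ (Smat n *ᵥ z) = z - z 0 • 1 := by
  ext l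
  induction l using Fin.induction with
  | zero => simp [Tmat_mulVec_zero]
  | succ i ih =>
    rw [Tmat_mulVec_succ, ih, Smat_mulVec_apply]
    simp

theorem mul_Tmat_mul_Smat {X : Matrix α (Fin (n + 1)) ℝ} (hX : X *ᵥ 1 = 0) :
    X * Tmat n * Smat n = X := by
  refine ext_iff_mulVec.mpr fun v => ?_
  rw [← mulVec_mulVec, ← mulVec_mulVec, Tmat_mulVec_Smat_mulVec, mulVec_sub, mulVec_smul, hX,
    smul_zero, sub_zero]

variable {X : Matrix (Fin (n + 1)) (Fin (n + 1)) ℝ}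

theorem Smat_mul_mul_Tmat_pow (hX : X *ᵥ 1 = 0) (k : ℕ) :
    (Smat n * X * Tmat n) ^ k = Smat n * X ^ k * Tmat n := by
  induction k with
  | zero => simp [Smat_mul_Tmat]
  | succ k ih =>
    rw [pow_succ', ih, pow_succ']
    simp only [Matrix.mul_assoc]
    rw [← Matrix.mul_assoc (Tmat n), ← Matrix.mul_assoc X, ← Matrix.mul_assoc X,
      mul_Tmat_mul_Smat hX]

theorem Smat_mulVec_ne_zero (hX : X *ᵥ 1 = 0) {r : ℝ} (hr : r ≠ 0) {z : Fin (n + 1) → ℝ}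
    (hz0 : z ≠ 0) (hz : X *ᵥ z = r • z) : Smat n *ᵥ z ≠ 0 := by
  intro h
  have hconst : z = z 0 • 1 := by
    have := Tmat_mulVec_Smat_mulVec z
    rwa [h, mulVec_zero, eq_comm, sub_eq_zero] at this
  have : r • z = 0 := by rw [← hz, hconst, mulVec_smul, hX, smul_zero]
  exact hz0 ((smul_eq_zero.mp this).resolve_left hr)

theorem Smat_mul_mul_Tmat_mulVec_Smat_mulVec (hX : X *ᵥ 1 = 0) {r : ℝ} {z : Fin (n + 1) → ℝ}
    (hz : X *ᵥ z = r • z) : (Smat n * X * Tmat n) *ᵥ (Smat n *ᵥ z) = r • (Smat n *ᵥ z) := by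
  rw [mulVec_mulVec, Matrix.mul_assoc, Matrix.mul_assoc, ← Matrix.mul_assoc X,
    mul_Tmat_mul_Smat hX, ← mulVec_mulVec, hz, mulVec_smul]

theorem exists_Smat_mul_mul_Tmat_pow_mulVec_apply_le (hX : X.IsHermitian) (hX1 : X *ᵥ 1 = 0)
    {r : ℝ} (hr : ∀ i, |hX.eigenvalues i| ≤ r) (v : Fin n → ℝ) (i : Fin n) :
    ∃ C, ∀ k : ℕ, ((Smat n * X * Tmat n) ^ k *ᵥ v) i ≤ C * r ^ k := by
  obtain ⟨C₁, hC₁⟩ := hX.exists_abs_pow_mulVec_apply_le hr (Tmat n *ᵥ v) i.succ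
  obtain ⟨C₂, hC₂⟩ := hX.exists_abs_pow_mulVec_apply_le hr (Tmat n *ᵥ v) i.castSucc
  refine ⟨C₁ + C₂, fun k => ?_⟩
  rw [Smat_mul_mul_Tmat_pow hX1, ← mulVec_mulVec, ← mulVec_mulVec, Smat_mulVec_apply]
  linarith [(abs_le.mp (hC₁ k)).2, (abs_le.mp (hC₂ k)).1]

end DifferenceMatrices
section PathGraph

variable {n : ℕ}

def pathDist (n : ℕ) : Matrix (Fin (n + 1)) (Fin (n + 1)) ℝ :=
  Matrix.of fun i j => |(i : ℝ) - j|

theorem pathDist_nonneg (i j : Fin (n + 1)) : 0 ≤ pathDist n i j := abs_nonneg _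

theorem pathDist_isHermitian : (pathDist n).IsHermitian :=
  Matrix.IsHermitian.ext fun i j => by simp [pathDist, abs_sub_comm]

theorem lap_pathDist_ne_zero (hn : 1 ≤ n) : lap (pathDist n) ≠ 0 := by
  intro h
  have h0 : (0 : Fin (n + 1)) ≠ Fin.last n := by simp [Fin.ext_iff]; omega
  have := congrFun (congrFun h 0) (Fin.last n)
  rw [lap_apply_of_ne h0] at this
  simp [pathDist] at this
  omega

theorem one_le_lap_pathDist_succ_sub {i : Fin n} {l : Fin (n + 1)} (hl : (i : ℕ) < l) :
    1 ≤ lap (pathDist n) i.succ l - lap (pathDist n) i.castSucc l := by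
  have hne : i.castSucc ≠ l := by rintro rfl; simp at hl
  rw [lap_apply_of_ne hne]
  rcases eq_or_ne i.succ l with rfl | hne'
  · have hdiag : 0 ≤ lap (pathDist n) i.succ i.succ := by
      rw [lap_apply_self]; exact Finset.sum_nonneg fun k _ => pathDist_nonneg _ _
    have hedge : pathDist n i.castSucc i.succ = 1 := by simp [pathDist]
    rw [hedge]
    linarith
  · have hl' : (i : ℝ) + 1 < l := by
      have : (i : ℕ) + 1 ≠ l := fun h => hne' (Fin.ext (by simpa using h))
      exact_mod_cast (by omega : (i : ℕ) + 1 < l)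
    rw [lap_apply_of_ne hne']
    simp only [pathDist, Matrix.of_apply, Fin.val_succ, Fin.val_castSucc]
    push_cast
    rw [abs_of_neg (by linarith), abs_of_neg (by linarith)]
    linarith

theorem lap_pathDist_succ_sub_le {i : Fin n} {l : Fin (n + 1)} (hl : (l : ℕ) ≤ i) :
    lap (pathDist n) i.succ l - lap (pathDist n) i.castSucc l ≤ -1 := by
  have hne : i.succ ≠ l := by rintro rfl; simp at hl
  rw [lap_apply_of_ne hne]
  rcases eq_or_ne i.castSucc l with rfl | hne'
  · have hdiag : 0 ≤ lap (pathDist n) i.castSucc i.castSucc := by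
      rw [lap_apply_self]; exact Finset.sum_nonneg fun k _ => pathDist_nonneg _ _
    have hedge : pathDist n i.succ i.castSucc = 1 := by simp [pathDist]
    rw [hedge]
    linarith
  · have hl' : (l : ℝ) < i := by
      have : (l : ℕ) ≠ i := fun h => hne' (Fin.ext (by simpa using h.symm))
      exact_mod_cast (by omega : (l : ℕ) < i)
    rw [lap_apply_of_ne hne']
    simp only [pathDist, Matrix.of_apply, Fin.val_succ, Fin.val_castSucc]
    push_cast
    rw [abs_of_pos (by linarith), abs_of_pos (by linarith)]
    linarith


theorem one_le_Smat_mul_lap_pathDist_mul_Tmat (i j : Fin n) :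
    1 ≤ (Smat n * lap (pathDist n) * Tmat n) i j := by
  set d : Fin (n + 1) → ℝ := fun l => lap (pathDist n) i.succ l - lap (pathDist n) i.castSucc l
  have hM : (Smat n * lap (pathDist n) * Tmat n) i j =
      ∑ l ∈ univ.filter (fun l : Fin (n + 1) => (j : ℕ) < l), d l := by
    rw [Matrix.mul_assoc, Smat_mul_apply, mul_Tmat_apply, mul_Tmat_apply, ← Finset.sum_sub_distrib]
  rw [hM]
  rcases lt_or_ge (i : ℕ) j with hij | hji
  · have hlast : Fin.last n ∈ univ.filter (fun l : Fin (n + 1) => (j : ℕ) < l) := by simp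
    calc 1 ≤ d (Fin.last n) := one_le_lap_pathDist_succ_sub (by simp)
      _ ≤ _ := Finset.single_le_sum (f := d) (fun l hl => zero_le_one.trans
        (one_le_lap_pathDist_succ_sub (hij.trans (Finset.mem_filter.mp hl).2))) hlast
  · -- the rows of the Laplacian sum to zero, so the sum over `l > j` is minus the one over `l ≤ j`
    have hzero : (0 : Fin (n + 1)) ∈ univ.filter (fun l : Fin (n + 1) => ¬ (j : ℕ) < l) := by
      simp
    have hle : ∀ l ∈ univ.filter (fun l : Fin (n + 1) => ¬ (j : ℕ) < l), 1 ≤ -d l := by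
      intro l hl
      have := lap_pathDist_succ_sub_le (i := i) (l := l)
        ((not_lt.mp (Finset.mem_filter.mp hl).2).trans hji)
      linarith
    have hrow : ∑ l, d l = 0 := by
      simp only [d, Finset.sum_sub_distrib, sum_lap_apply, sub_zero]
    have htotal := Finset.sum_filter_add_sum_filter_not univ (fun l : Fin (n + 1) => (j : ℕ) < l) d
    calc 1 ≤ -d 0 := hle 0 hzero
      _ ≤ ∑ l ∈ univ.filter (fun l : Fin (n + 1) => ¬ (j : ℕ) < l), -d l :=
        Finset.single_le_sum (fun l hl => zero_le_one.trans (hle l hl)) hzero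
      _ = _ := by rw [Finset.sum_neg_distrib]; linarith [hrow ▸ htotal]

end PathGraph

theorem path_distLap_largest_simple_general (n : ℕ) (hn : 1 ≤ n)
    (D : Matrix (Fin (n + 1)) (Fin (n + 1)) ℝ)
    (hD : ∀ i j : Fin (n + 1), D i j = |(i : ℝ) - (j : ℝ)|)
    (lam : ℝ)
    (hmax : ∀ μ : ℝ, (∃ x : Fin (n + 1) → ℝ, x ≠ 0 ∧ (lap D).mulVec x = μ • x) → μ ≤ lam) :
    ∀ x y : Fin (n + 1) → ℝ, x ≠ 0 → (lap D).mulVec x = lam • x →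
      (lap D).mulVec y = lam • y → ∃ c : ℝ, y = c • x := by
  obtain rfl : D = pathDist n := Matrix.ext hD
  have hL : (lap (pathDist n)).IsHermitian := lap_isHermitian pathDist_isHermitian
  have hspec : ∀ i, |hL.eigenvalues i| ≤ lam := fun i => by
    have hv : ⇑(hL.eigenvectorBasis i) ≠ 0 :=
      (WithLp.ofLp_eq_zero 2).ne.mpr (hL.eigenvectorBasis.orthonormal.ne_zero i)
    have hbasis := hL.mulVec_eigenvectorBasis i
    rw [abs_of_nonneg (lap_eigenvalue_nonneg pathDist_nonneg hv hbasis)]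
    exact hmax _ ⟨_, hv, hbasis⟩
  have hlam : 0 < lam := by
    obtain ⟨v, t, ht, hv, hvt⟩ := hL.exists_eigenvector_of_ne_zero (lap_pathDist_ne_zero hn)
    exact ((lap_eigenvalue_nonneg pathDist_nonneg hv hvt).lt_of_ne' ht).trans_le
      (hmax t ⟨v, hv, hvt⟩)
  have hfirst : ∀ z ∈ Module.End.eigenspace (toLin' (lap (pathDist n))) lam, z ≠ 0 →
      (LinearMap.proj ⟨0, hn⟩ ∘ₗ mulVecLin (Smat n)) z ≠ 0 := fun z hz hz0 => by
    rw [Module.End.mem_eigenspace_iff, toLin'_apply] at hz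
    exact apply_ne_zero_of_mulVec_eq_smul
      (fun i j => one_pos.trans_le (one_le_Smat_mul_lap_pathDist_mul_Tmat i j)) hlam.le
      (exists_Smat_mul_mul_Tmat_pow_mulVec_apply_le hL lap_mulVec_one hspec)
      (Smat_mulVec_ne_zero lap_mulVec_one hlam.ne' hz0 hz)
      (Smat_mul_mul_Tmat_mulVec_Smat_mulVec lap_mulVec_one hz) _
  intro x y hx0 hx hy
  exact Submodule.exists_eq_smul_of_forall_apply_ne_zero hfirst
    (by rwa [Module.End.mem_eigenspace_iff, toLin'_apply]) hx0
    (by rwa [Module.End.mem_eigenspace_iff, toLin'_apply])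

theorem path_distLap_largest_simple (n : ℕ) (hn : 1 ≤ n)
    (D : Matrix (Fin (n + 1)) (Fin (n + 1)) ℝ)
    (hD : ∀ i j : Fin (n + 1), D i j = |(i : ℝ) - (j : ℝ)|)
    (lam : ℝ)
    (hev : ∃ x : Fin (n + 1) → ℝ, x ≠ 0 ∧ (lap D).mulVec x = lam • x)
    (hmax : ∀ μ : ℝ, (∃ x : Fin (n + 1) → ℝ, x ≠ 0 ∧ (lap D).mulVec x = μ • x) → μ ≤ lam) :
    ∀ x y : Fin (n + 1) → ℝ, x ≠ 0 → (lap D).mulVec x = lam • x →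
      (lap D).mulVec y = lam • y → ∃ c : ℝ, y = c • x :=
  path_distLap_largest_simple_general n hn D hD lam hmax
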